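/- arXiv:2507.09946 — 4 statements merged into one kernel-verified Lean document; each statement's English description precedes it below -/
import Mathlib

section
/- Every functor f : A → B between small categories that is injective on objects, faithful, and conservative is right orthogonal to the inclusion functor from the walking arrow category 𝟚 = {0 → 1} into the walking isomorphism category 𝕀 = {0 ≅ 1}. -/
/-!
A commutative square from `arrowToIso : 𝟚 ⥤ 𝕀` to `f` is an arrow `φ = u(0 ⟶ 1)` of `A` whose
image under `f` is an isomorphism, namely `v(0 ≅ 1)`. Since `f` is conservative, `φ` is itself an
isomorphism, and the functor `𝕀 ⥤ A` picking out `φ` is a filler. Fillers are unique because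
`arrowToIso` is an epimorphism of categories: a functor out of `𝕀` is determined by its
restriction to `𝟚`, as every arrow of `𝕀` is `a⁻¹ ≫ b` for arrows `a`, `b` out of `0` in `𝟚`.
-/

open CategoryTheory

/-- The walking isomorphism category `𝕀 = {0 ≅ 1}`: two objects, with exactly one
morphism between any two objects. -/
def WalkingIso : Type := Fin 2

instance : Category _root_.WalkingIso where
  Hom _ _ := PUnit
  id _ := PUnit.unit
  comp _ _ := PUnit.unit

/-- The inclusion of the walking arrow `𝟚 = {0 → 1}` (the preorder `Fin 2`)
into the walking isomorphism `𝕀`. -/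
def arrowToIso : (Fin 2) ⥤ _root_.WalkingIso where
  obj x := x
  map _ := PUnit.unit

theorem CategoryTheory.Functor.isIso_map_of_comp_eq_comp {J G A B : Type*} [Category J]
    [Category G] [IsGroupoid G] [Category A] [Category B] (f : A ⥤ B) [f.ReflectsIsomorphisms]
    {u : J ⥤ A} {w : J ⥤ G} {v : G ⥤ B} (h : u ⋙ f = w ⋙ v) {i j : J} (g : i ⟶ j) :
    IsIso (u.map g) := by
  have : IsIso ((u ⋙ f).map g) := by
    rw [h]
    exact v.map_isIso (w.map g)
  have : IsIso (f.map (u.map g)) := this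
  exact isIso_of_reflects_iso (u.map g) f

namespace WalkingIso

instance (x y : _root_.WalkingIso) : Subsingleton (x ⟶ y) :=
  inferInstanceAs (Subsingleton PUnit)

instance : IsGroupoid _root_.WalkingIso where
  all_isIso _ := ⟨PUnit.unit, Subsingleton.elim _ _, Subsingleton.elim _ _⟩

variable {C : Type*} [Category C]

def fromIso {X Y : C} (e : X ≅ Y) : _root_.WalkingIso ⥤ C where
  obj
    | ⟨0, _⟩ => X
    | ⟨1, _⟩ => Y
  map {x y} _ := match x, y with
    | ⟨0, _⟩, ⟨0, _⟩ => 𝟙 X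
    | ⟨0, _⟩, ⟨1, _⟩ => e.hom
    | ⟨1, _⟩, ⟨0, _⟩ => e.inv
    | ⟨1, _⟩, ⟨1, _⟩ => 𝟙 Y
  map_id
    | ⟨0, _⟩ | ⟨1, _⟩ => rfl
  map_comp {x y z} _ _ := by
    match x, y, z with
    | ⟨0, _⟩, ⟨0, _⟩, ⟨0, _⟩ | ⟨0, _⟩, ⟨0, _⟩, ⟨1, _⟩ | ⟨0, _⟩, ⟨1, _⟩, ⟨0, _⟩
    | ⟨0, _⟩, ⟨1, _⟩, ⟨1, _⟩ | ⟨1, _⟩, ⟨0, _⟩, ⟨0, _⟩ | ⟨1, _⟩, ⟨0, _⟩, ⟨1, _⟩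
    | ⟨1, _⟩, ⟨1, _⟩, ⟨0, _⟩ | ⟨1, _⟩, ⟨1, _⟩, ⟨1, _⟩ => simp

theorem arrowToIso_comp_fromIso (u : Fin 2 ⥤ C) [IsIso (u.map (homOfLE zero_le_one))] :
    arrowToIso ⋙ fromIso (asIso (u.map (homOfLE zero_le_one))) = u :=
  ComposableArrows.ext₁ rfl rfl ((Category.id_comp _).trans (Category.comp_id _)).symm

theorem ext_of_arrowToIso_comp {F G : _root_.WalkingIso ⥤ C}
    (h : arrowToIso ⋙ F = arrowToIso ⋙ G) : F = G := by
  have hobj (i : Fin 2) : F.obj (arrowToIso.obj i) = G.obj (arrowToIso.obj i) :=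
    Functor.congr_obj h i
  have hmap {i j : Fin 2} (hij : i ≤ j) :
      F.map (arrowToIso.map (homOfLE hij)) =
        eqToHom (hobj i) ≫ G.map (arrowToIso.map (homOfLE hij)) ≫ eqToHom (hobj j).symm :=
    Functor.congr_hom h (homOfLE hij)
  suffices ∀ (i j : Fin 2) (g : arrowToIso.obj i ⟶ arrowToIso.obj j),
      F.map g = eqToHom (hobj i) ≫ G.map g ≫ eqToHom (hobj j).symm from
    CategoryTheory.Functor.ext hobj this
  intro i j g
  obtain rfl : g = inv (arrowToIso.map (homOfLE (Fin.zero_le i))) ≫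
      arrowToIso.map (homOfLE (Fin.zero_le j)) := Subsingleton.elim _ _
  rw [F.map_comp, G.map_comp]
  simp only [Functor.map_inv, hmap]
  rw [IsIso.inv_comp_eq]
  simp

end WalkingIso

theorem rightOrthogonal_arrowToIso_of_injOnObj_faithful_conservative_general
    {A B : Type} [SmallCategory A] [SmallCategory B] (f : A ⥤ B)
    (hcons : f.ReflectsIsomorphisms)
    (u : (Fin 2) ⥤ A) (v : _root_.WalkingIso ⥤ B)
    (hsq : u ⋙ f = arrowToIso ⋙ v) :
    ∃! d : _root_.WalkingIso ⥤ A, arrowToIso ⋙ d = u ∧ d ⋙ f = v := by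
  have := Functor.isIso_map_of_comp_eq_comp f hsq (homOfLE (zero_le_one : (0 : Fin 2) ≤ 1))
  have hrestrict := WalkingIso.arrowToIso_comp_fromIso u
  refine ⟨WalkingIso.fromIso (asIso (u.map (homOfLE zero_le_one))), ⟨hrestrict, ?_⟩,
    fun d hd => WalkingIso.ext_of_arrowToIso_comp (hd.1.trans hrestrict.symm)⟩
  apply WalkingIso.ext_of_arrowToIso_comp
  rw [← Functor.assoc, hrestrict, hsq]

/-- Every injective-on-objects, faithful, conservative functor between small categories is
right orthogonal to the inclusion `𝟚 → 𝕀`: every commutative square admits a unique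
diagonal filler. -/
theorem rightOrthogonal_arrowToIso_of_injOnObj_faithful_conservative
    {A B : Type} [SmallCategory A] [SmallCategory B] (f : A ⥤ B)
    (hinj : Function.Injective f.obj) (hfaith : f.Faithful)
    (hcons : f.ReflectsIsomorphisms)
    (u : (Fin 2) ⥤ A) (v : _root_.WalkingIso ⥤ B)
    (hsq : u ⋙ f = arrowToIso ⋙ v) :
    ∃! d : _root_.WalkingIso ⥤ A, arrowToIso ⋙ d = u ∧ d ⋙ f = v :=
  rightOrthogonal_arrowToIso_of_injOnObj_faithful_conservative_general f hcons u v hsq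
end

section
/- Let f : A → B be a functor between small categories and let C be the smallest subcategory of B containing all objects f(a), all morphisms f(h), and closed under inverses of those of its morphisms that are invertible in B. If C = B (i.e., C contains all objects and morphisms of B), then f is an epimorphism in Cat. -/
/-! The morphisms of `B` on which two functors `u v : B ⥤ D` agree are closed under composition
and under inverses, since functors preserve both. If `f ⋙ u = f ⋙ v` they contain the image
of `f`, hence the whole closure, which is all of `B`; so `u = v`. -/

open CategoryTheory

/-- Membership in the smallest subcategory `C = \overline{f(A)}` of `B` containing the image
of `f` and closed under composition and under inverses (in `B`) of its invertible
morphisms. -/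
inductive InClosure {A B : Type} [Category A] [Category B] (f : A ⥤ B) :
    ∀ {x y : B}, (x ⟶ y) → Prop
  | img {a a' : A} (h : a ⟶ a') : InClosure f (f.map h)
  | comp {x y z : B} {g : x ⟶ y} {g' : y ⟶ z} :
      InClosure f g → InClosure f g' → InClosure f (g ≫ g')
  | inv {x y : B} (g : x ⟶ y) (g' : y ⟶ x)
      (hl : g ≫ g' = 𝟙 x) (hr : g' ≫ g = 𝟙 y) :
      InClosure f g → InClosure f g'

namespace CategoryTheory.Functor

variable {B D : Type} [Category B] [Category D]

def AgreeOn (u v : B ⥤ D) {x y : B} (k : x ⟶ y) : Prop :=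
  ∃ (hx : u.obj x = v.obj x) (hy : u.obj y = v.obj y),
    u.map k = eqToHom hx ≫ v.map k ≫ eqToHom hy.symm

variable {u v : B ⥤ D}

theorem AgreeOn.comp {x y z : B} {g : x ⟶ y} {g' : y ⟶ z}
    (hg : u.AgreeOn v g) (hg' : u.AgreeOn v g') : u.AgreeOn v (g ≫ g') := by
  obtain ⟨hx, _, e⟩ := hg
  obtain ⟨_, hz, e'⟩ := hg'
  exact ⟨hx, hz, by simp [e, e']⟩

theorem AgreeOn.of_inverse {x y : B} {g : x ⟶ y} {g' : y ⟶ x}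
    (hl : g ≫ g' = 𝟙 x) (hr : g' ≫ g = 𝟙 y) (hg : u.AgreeOn v g) : u.AgreeOn v g' := by
  obtain ⟨hx, hy, e⟩ := hg
  let i : x ≅ y := ⟨g, g', hl, hr⟩
  have hi : u.mapIso i = eqToIso hx ≪≫ v.mapIso i ≪≫ eqToIso hy.symm := Iso.ext e
  exact ⟨hy, hx, by simpa [i] using congrArg Iso.inv hi⟩

theorem agreeOn_of_inClosure {A : Type} [Category A] {f : A ⥤ B} (huv : f ⋙ u = f ⋙ v)
    {x y : B} {k : x ⟶ y} (hk : InClosure f k) : u.AgreeOn v k := by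
  induction hk with
  | img h => exact ⟨congr_obj huv _, congr_obj huv _, congr_hom huv h⟩
  | comp _ _ ihg ihg' => exact ihg.comp ihg'
  | inv _ _ hl hr _ ih => exact ih.of_inverse hl hr

theorem ext_of_agreeOn (h : ∀ ⦃x y : B⦄ (k : x ⟶ y), u.AgreeOn v k) : u = v :=
  Functor.ext (fun x => (h (𝟙 x)).1) fun _ _ k => (h k).2.2

end CategoryTheory.Functor

/-- If the closure `\overline{f(A)}` contains every morphism of `B`, then `f` is an
epimorphism in `Cat`. -/
theorem epi_of_closure_eq_top (A B : Cat.{0,0}) (f : A ⟶ B)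
    (hall : ∀ ⦃x y : B⦄ (g : x ⟶ y), InClosure f.toFunctor g) :
    Epi f := by
  refine ⟨fun {D} u v huv => Cat.ext ?_⟩
  have huv' : f.toFunctor ⋙ u.toFunctor = f.toFunctor ⋙ v.toFunctor :=
    congrArg Cat.Hom.toFunctor huv
  exact Functor.ext_of_agreeOn fun _ _ k => Functor.agreeOn_of_inClosure huv' (hall k)
end

section
/- For any functor f : A → B between small categories, f factors as f = m ∘ e where e : A → \overline{f(A)} is the codomain restriction of f (which is an epimorphism in Cat) and m : \overline{f(A)} → B is the subcategory inclusion (which is injective on objects, faithful, and conservative). -/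
/-!
Two functors out of `\overline{f(A)}` that agree after `e` agree on objects, since every object
is some `f a`. The morphisms on which they agree (modulo that identification of objects) contain
the image of `f`, are closed under composition, and contain the inverse of each of their
isomorphisms, because functors preserve inverses and inverses are unique. Induction on the
generation of the closure then shows that `e` is epi. Conservativity of `m` is the closure of
`\overline{f(A)}` under inverses.
-/

open CategoryTheory

/-- The subcategory `\overline{f(A)}` of `B`: objects are the objects in the image of `f`,
morphisms are the morphisms of the closure. -/
def ImageClosure {A B : Type} [Category A] [Category B] (f : A ⥤ B) : Type :=
  { b : B // ∃ a : A, f.obj a = b }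

instance {A B : Type} [Category A] [Category B] (f : A ⥤ B) :
    Category (ImageClosure f) where
  Hom x y := { g : x.1 ⟶ y.1 // InClosure f g }
  id x := ⟨𝟙 x.1, by
    obtain ⟨b, a, rfl⟩ := x
    simpa using InClosure.img (f := f) (𝟙 a)⟩
  comp g h := ⟨g.1 ≫ h.1, InClosure.comp g.2 h.2⟩
  id_comp g := by apply Subtype.ext; simp
  comp_id g := by apply Subtype.ext; simp
  assoc g h k := by apply Subtype.ext; simp

/-- The codomain restriction `e : A → \overline{f(A)}` of `f`. -/
def codRestriction {A B : Type} [Category A] [Category B] (f : A ⥤ B) :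
    A ⥤ ImageClosure f where
  obj a := ⟨f.obj a, a, rfl⟩
  map h := ⟨f.map h, InClosure.img h⟩
  map_id a := Subtype.ext (f.map_id a)
  map_comp g h := Subtype.ext (f.map_comp g h)

/-- The inclusion `m : \overline{f(A)} → B`. -/
def closureInclusion {A B : Type} [Category A] [Category B] (f : A ⥤ B) :
    ImageClosure f ⥤ B where
  obj x := x.1
  map g := g.1

namespace CategoryTheory.Functor

variable {C D : Type*} [Category C] [Category D] {G H : C ⥤ D}

def mapEqLocus (hobj : ∀ X, G.obj X = H.obj X) : MorphismProperty C :=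
  fun X Y g => G.map g = eqToHom (hobj X) ≫ H.map g ≫ eqToHom (hobj Y).symm

variable {hobj : ∀ X, G.obj X = H.obj X}

lemma mapEqLocus_comp {X Y Z : C} {g : X ⟶ Y} {g' : Y ⟶ Z}
    (hg : mapEqLocus hobj g) (hg' : mapEqLocus hobj g') : mapEqLocus hobj (g ≫ g') := by
  simp only [mapEqLocus, map_comp] at *
  simp [hg, hg']

lemma mapEqLocus_of_inverse {X Y : C} {u : X ⟶ Y} {v : Y ⟶ X}
    (huv : u ≫ v = 𝟙 X) (hvu : v ≫ u = 𝟙 Y) (hu : mapEqLocus hobj u) :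
    mapEqLocus hobj v := by
  have : IsIso u := ⟨v, huv, hvu⟩
  have hv : v = CategoryTheory.inv u := (IsIso.inv_eq_of_hom_inv_id huv).symm
  subst hv
  simp only [mapEqLocus, map_inv] at *
  simp [hu]

end CategoryTheory.Functor

open Functor

section

variable {A B : Type} [Category A] [Category B] {f : A ⥤ B}

lemma InClosure.source_target_mem_range {x y : B} {g : x ⟶ y} (hg : InClosure f g) :
    x ∈ Set.range f.obj ∧ y ∈ Set.range f.obj := by
  induction hg with
  | img h => exact ⟨⟨_, rfl⟩, ⟨_, rfl⟩⟩
  | comp _ _ ih ih' => exact ⟨ih.1, ih'.2⟩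
  | inv _ _ _ _ _ ih => exact ⟨ih.2, ih.1⟩

lemma ext_of_codRestriction_comp_eq {C : Type*} [Category C] {G H : ImageClosure f ⥤ C}
    (hGH : codRestriction f ⋙ G = codRestriction f ⋙ H) : G = H := by
  have hobj (x : ImageClosure f) : G.obj x = H.obj x := by
    obtain ⟨_, a, rfl⟩ := x
    exact congr_obj hGH a
  have hmap {x y : B} (g : x ⟶ y) (hg : InClosure f g) (hx : ∃ a, f.obj a = x)
      (hy : ∃ a, f.obj a = y) :
      mapEqLocus hobj (X := show ImageClosure f from ⟨x, hx⟩) (Y := ⟨y, hy⟩) ⟨g, hg⟩ := by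
    induction hg with
    | img h => exact congr_hom hGH h
    | comp hg hg' ih ih' =>
      have hmid := (InClosure.source_target_mem_range hg).2
      exact mapEqLocus_comp (ih hx hmid) (ih' hmid hy)
    | inv g g' hl hr _ ih =>
      exact mapEqLocus_of_inverse (Subtype.ext hl) (Subtype.ext hr) (ih hy hx)
  exact CategoryTheory.Functor.ext hobj fun ⟨_, hx⟩ ⟨_, hy⟩ ⟨g, hg⟩ => hmap g hg hx hy

lemma closureInclusion_obj_injective : Function.Injective (closureInclusion f).obj :=
  fun _ _ h => Subtype.ext h

instance : (closureInclusion f).Faithful :=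
  ⟨fun h => Subtype.ext h⟩

instance : (closureInclusion f).ReflectsIsomorphisms := by
  refine ⟨fun g (_ : IsIso g.1) => ?_⟩
  have hinv : InClosure f (inv g.1) := InClosure.inv g.1 _ (by simp) (by simp) g.2
  exact ⟨⟨⟨inv g.1, hinv⟩, Subtype.ext (IsIso.hom_inv_id g.1),
    Subtype.ext (IsIso.inv_hom_id g.1)⟩⟩

end

lemma epi_codRestriction_toCatHom {A B : Type} [SmallCategory A] [SmallCategory B]
    (f : A ⥤ B) :
    Epi (show Cat.of A ⟶ Cat.of (ImageClosure f) from (codRestriction f).toCatHom) :=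
  ⟨fun _ _ hGH => Cat.Hom.ext (ext_of_codRestriction_comp_eq (congrArg Cat.Hom.toFunctor hGH))⟩

/-- Every functor `f : A → B` between small categories factors as `f = m ∘ e` where
`e : A → \overline{f(A)}` is the codomain restriction (an epimorphism in `Cat`) and
`m : \overline{f(A)} → B` is the subcategory inclusion (injective on objects, faithful,
and conservative). -/
theorem factorization_through_closure {A B : Type} [SmallCategory A] [SmallCategory B]
    (f : A ⥤ B) :
    codRestriction f ⋙ closureInclusion f = f ∧
      Epi (show Cat.of A ⟶ Cat.of (ImageClosure f) from (codRestriction f).toCatHom) ∧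
      Function.Injective (closureInclusion f).obj ∧
      (closureInclusion f).Faithful ∧
      (closureInclusion f).ReflectsIsomorphisms :=
  ⟨rfl, epi_codRestriction_toCatHom f, closureInclusion_obj_injective, inferInstance,
    inferInstance⟩
end

section
/- In the category ω-CPO of posets with joins of ω-chains and maps preserving them, the classes (dense maps, join-reflecting embeddings) form a factorization: every morphism factors as a dense map followed by an order-reflecting embedding that reflects joins of ω-chains, where a map is dense if the closure of its image under joins of ω-chains is the whole codomain. -/
open OmegaCompletePartialOrder

/-- Membership in the closure of a set under joins of ω-chains: the least subset
containing `S` and closed under `ωSup` of chains. -/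
inductive OmegaChainClosure {Y : Type} [OmegaCompletePartialOrder Y] (S : Set Y) : Y → Prop
  | of {y : Y} : y ∈ S → OmegaChainClosure S y
  | sup (c : Chain Y) : (∀ n : ℕ, OmegaChainClosure S (c n)) → OmegaChainClosure S (ωSup c)

/-! Factor `f` through the closure `Z` of its image. A closed subset is a sub-ω-cpo whose
joins are computed in `Y`, so the inclusion `Z → Y` reflects order and joins of ω-chains;
and by induction on membership in the closure, every point of `Z` is reached from the image
of `X` by iterated joins taken inside `Z`. -/

namespace OmegaChainClosure

variable {X Y : Type} [OmegaCompletePartialOrder X] [OmegaCompletePartialOrder Y] {S : Set Y}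

theorem ωSup_mem (c : Chain Y) (hc : ∀ y ∈ c, OmegaChainClosure S y) :
    OmegaChainClosure S (ωSup c) :=
  sup c fun n => hc _ ⟨n, rfl⟩

instance : OmegaCompletePartialOrder {y // OmegaChainClosure S y} :=
  OmegaCompletePartialOrder.subtype _ ωSup_mem

def val : {y // OmegaChainClosure S y} →𝒄 Y where
  toFun := Subtype.val
  monotone' _ _ h := h
  map_ωSup' _ := rfl

def corestrict (f : X →𝒄 Y) : X →𝒄 {y // OmegaChainClosure (Set.range f) y} where
  toFun x := ⟨f x, of ⟨x, rfl⟩⟩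
  monotone' _ _ h := f.monotone h
  map_ωSup' c := Subtype.ext (f.continuous c)

theorem preimage_val_range (f : X →𝒄 Y) :
    Subtype.val ⁻¹' Set.range f = Set.range (corestrict f) := by
  ext ⟨y, hy⟩
  constructor
  · rintro ⟨x, rfl⟩
    exact ⟨x, rfl⟩
  · rintro ⟨x, hx⟩
    exact ⟨x, congrArg Subtype.val hx⟩

theorem of_preimage_val (z : {y // OmegaChainClosure S y}) :
    OmegaChainClosure (Subtype.val ⁻¹' S) z := by
  obtain ⟨y, hy⟩ := z
  induction hy with
  | of hy => exact of hy
  | sup c hc ih =>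
    let c' : Chain {y // OmegaChainClosure S y} :=
      ⟨fun n => ⟨c n, hc n⟩, fun _ _ h => c.monotone h⟩
    have hsup : ωSup c' = ⟨ωSup c, sup c hc⟩ := Subtype.ext (congrArg ωSup (Chain.ext rfl))
    exact hsup ▸ sup c' ih

end OmegaChainClosure

open OmegaChainClosure in
/-- In `ω-CPO`, every morphism factors as a dense map followed by an order-reflecting
embedding that reflects joins of ω-chains. -/
theorem omegaCPO_dense_joinReflecting_factorization
    (X Y : Type) [OmegaCompletePartialOrder X] [OmegaCompletePartialOrder Y]
    (f : X →𝒄 Y) :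
    ∃ (Z : Type) (_ : OmegaCompletePartialOrder Z) (e : X →𝒄 Z) (m : Z →𝒄 Y),
      (∀ z : Z, OmegaChainClosure (Set.range e) z) ∧
      (∀ a b : Z, m a ≤ m b → a ≤ b) ∧
      Function.Injective m ∧
      (∀ (c : Chain Z) (z : Z), m z = ωSup (c.map m.toOrderHom) → z = ωSup c) ∧
      (∀ x : X, m (e x) = f x) :=
  ⟨_, inferInstance, corestrict f, val, fun z => preimage_val_range f ▸ of_preimage_val z,
    fun _ _ h => h, Subtype.val_injective, fun _ _ h => Subtype.ext h, fun _ => rfl⟩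
end
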